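/- arXiv:1907.04344 — 7 statements merged into one kernel-verified Lean document; each statement's English description precedes it below -/
import Mathlib

section
/- Let X be a topological space. Then the weak Lindelöf number of X is at most its cellularity: for every infinite cardinal κ, if every pairwise disjoint family of nonempty open subsets of X has size ≤ κ, then every open cover of X has a subfamily of size ≤ κ whose union is dense in X. -/
open Set Cardinal

universe u

/-- If every pairwise disjoint family of nonempty open subsets of `X` has size `≤ κ`
(cellularity `≤ κ`), then every open cover of `X` has a subfamily of size `≤ κ`
whose union is dense in `X` (weak Lindelöf number `≤ κ`). -/
theorem wL_le_cellularity {X : Type u} [TopologicalSpace X] (κ : Cardinal.{u})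
    (hκ : ℵ₀ ≤ κ)
    (hc : ∀ 𝒞 : Set (Set X), (∀ C ∈ 𝒞, IsOpen C ∧ C.Nonempty) →
      𝒞.PairwiseDisjoint id → #𝒞 ≤ κ) :
    ∀ 𝒰 : Set (Set X), (∀ U ∈ 𝒰, IsOpen U) → ⋃₀ 𝒰 = Set.univ →
      ∃ 𝒱 ⊆ 𝒰, #𝒱 ≤ κ ∧ closure (⋃₀ 𝒱) = Set.univ := by
  intro 𝒰 hopen hcov
  -- family of candidate cells
  set S : Set (Set X) := {C | IsOpen C ∧ C.Nonempty ∧ ∃ U ∈ 𝒰, C ⊆ U} with hS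
  -- maximal pairwise disjoint subfamily of S
  obtain ⟨𝒞, h𝒞, hmax⟩ :
      ∃ 𝒞, Maximal (fun t => t ⊆ S ∧ t.PairwiseDisjoint id) 𝒞 := by
    apply zorn_subset
    intro c hc' hchain
    refine ⟨⋃₀ c, ⟨?_, ?_⟩, fun s hs => subset_sUnion_of_mem hs⟩
    · intro x hx
      obtain ⟨t, ht, hxt⟩ := hx
      exact (hc' ht).1 hxt
    · intro a ha b hb hab
      obtain ⟨t1, ht1, hat⟩ := ha
      obtain ⟨t2, ht2, hbt⟩ := hb
      rcases hchain.total ht1 ht2 with h | h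
      · exact (hc' ht2).2 (h hat) hbt hab
      · exact (hc' ht1).2 hat (h hbt) hab
  obtain ⟨h𝒞S, h𝒞disj⟩ := h𝒞
  -- 𝒞 has nonempty open members
  have h𝒞prop : ∀ C ∈ 𝒞, IsOpen C ∧ C.Nonempty := fun C hC =>
    ⟨(h𝒞S hC).1, (h𝒞S hC).2.1⟩
  have hcard : #𝒞 ≤ κ := hc 𝒞 h𝒞prop h𝒞disj
  -- ⋃₀ 𝒞 is dense
  have hdense : Dense (⋃₀ 𝒞) := by
    rw [dense_iff_inter_open]
    intro W hW hWne
    by_contra h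
    push_neg at h

    obtain ⟨x, hxW⟩ := hWne
    have hx : x ∈ ⋃₀ 𝒰 := hcov ▸ mem_univ x
    obtain ⟨U, hU, hxU⟩ := hx
    set W' : Set X := W ∩ U with hW'
    have hW'S : W' ∈ S := ⟨hW.inter (hopen U hU), ⟨x, hxW, hxU⟩, U, hU, inter_subset_right⟩
    have hW'dis : ∀ C ∈ 𝒞, Disjoint W' C := by
      intro C hC
      rw [Set.disjoint_left]
      intro y hyW' hyC
      have : y ∈ W ∩ ⋃₀ 𝒞 := ⟨hyW'.1, C, hC, hyC⟩
      rw [h] at this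
      exact this
    have hW'notin : W' ∉ 𝒞 := by
      intro hmem
      have := (hW'dis W' hmem).eq_bot_of_le le_rfl
      exact absurd (⟨x, hxW, hxU⟩ : W'.Nonempty) (by simp [this])
    have := hmax (y := insert W' 𝒞)
      ⟨insert_subset hW'S h𝒞S, by
        intro a ha b hb hab
        rcases ha with rfl | ha <;> rcases hb with rfl | hb
        · exact absurd rfl hab
        · exact hW'dis b hb
        · exact (hW'dis a ha).symm
        · exact h𝒞disj ha hb hab⟩
      (subset_insert _ _)
    exact hW'notin (this (mem_insert _ _))
  -- choose covers
  choose f hf𝒰 hfsub using fun C (hC : C ∈ 𝒞) => (h𝒞S hC).2.2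
  set 𝒱 : Set (Set X) := (fun C : 𝒞 => f C C.2) '' univ with h𝒱
  refine ⟨𝒱, ?_, ?_, ?_⟩
  · rintro V ⟨C, _, rfl⟩
    exact hf𝒰 C C.2
  · calc #𝒱 ≤ #𝒞 := by
          rw [h𝒱]
          exact mk_image_le.trans mk_univ.le
      _ ≤ κ := hcard
  · rw [← Set.univ_subset_iff, ← hdense.closure_eq]
    apply closure_mono
    intro y hy
    obtain ⟨C, hC, hyC⟩ := hy
    exact ⟨f C hC, ⟨⟨C, hC⟩, mem_univ _, rfl⟩, hfsub C hC hyC⟩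
end

section
/- For every topological space X and infinite cardinal κ, if the cellularity of X is at most κ (every pairwise disjoint family of nonempty open sets has size ≤ κ), then the piecewise weak Lindelöf degree for closed sets is at most κ: for every closed F ⊆ X, every open family U covering F, and every decomposition (U_i)_{i∈I} of U, there are subfamilies V_i ⊆ U_i with |V_i| ≤ κ such that F ⊆ ⋃_{i∈I} closure(⋃ V_i). -/
open Set Cardinal

universe u

/-- Single-family version: if cellularity ≤ κ, every open family has a subfamily of
size ≤ κ whose union's closure contains the union of the whole family. -/
lemma weakLindelof_aux {X : Type u} [TopologicalSpace X] (κ : Cardinal.{u})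
    (hc : ∀ 𝒞 : Set (Set X), (∀ C ∈ 𝒞, IsOpen C ∧ C.Nonempty) →
      𝒞.PairwiseDisjoint id → #𝒞 ≤ κ)
    (𝒰 : Set (Set X)) (hop : ∀ U ∈ 𝒰, IsOpen U) :
    ∃ 𝒱 : Set (Set X), 𝒱 ⊆ 𝒰 ∧ #𝒱 ≤ κ ∧ ⋃₀ 𝒰 ⊆ closure (⋃₀ 𝒱) := by
  classical
  set S : Set (Set (Set X)) :=
    {𝒞 | 𝒞.PairwiseDisjoint id ∧ ∀ C ∈ 𝒞, IsOpen C ∧ C.Nonempty ∧ ∃ U ∈ 𝒰, C ⊆ U} with hS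
  obtain ⟨𝒞, h𝒞, hmax⟩ : ∃ 𝒞, Maximal (· ∈ S) 𝒞 := by
    apply zorn_subset
    intro c hcS hchain
    refine ⟨⋃₀ c, ⟨?_, ?_⟩, fun s hs => subset_sUnion_of_mem hs⟩
    · intro A hA B hB hAB
      obtain ⟨a, ha, hAa⟩ := hA
      obtain ⟨b, hb, hBb⟩ := hB
      rcases hchain.total ha hb with h | h
      · exact (hcS hb).1 (h hAa) hBb hAB
      · exact (hcS ha).1 hAa (h hBb) hAB
    · rintro C ⟨a, ha, hCa⟩
      exact (hcS ha).2 C hCa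
  have hcard : #𝒞 ≤ κ := hc 𝒞 (fun C hC => ⟨(h𝒞.2 C hC).1, (h𝒞.2 C hC).2.1⟩) h𝒞.1
  -- choose a superset in 𝒰 for each cell
  have hex : ∀ C : 𝒞, ∃ U ∈ 𝒰, (C : Set X) ⊆ U := fun C => (h𝒞.2 C C.2).2.2
  choose f hf𝒰 hfsub using hex
  refine ⟨Set.range f, ?_, ?_, ?_⟩
  · rintro U ⟨C, rfl⟩; exact hf𝒰 C
  · exact Cardinal.mk_range_le.trans hcard
  · -- ⋃₀ 𝒰 ⊆ closure (⋃₀ 𝒞) ⊆ closure (⋃₀ range f)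
    have hsub : ⋃₀ 𝒞 ⊆ ⋃₀ Set.range f := by
      rintro x ⟨C, hC, hxC⟩
      exact ⟨f ⟨C, hC⟩, ⟨⟨C, hC⟩, rfl⟩, hfsub ⟨C, hC⟩ hxC⟩
    refine fun x hx => closure_mono hsub ?_
    obtain ⟨U, hU, hxU⟩ := hx
    rw [mem_closure_iff]
    intro N hN hxN
    by_contra hne
    rw [Set.not_nonempty_iff_eq_empty] at hne
    -- G = N ∩ U is a nonempty open set contained in U, disjoint from all cells
    set G : Set X := N ∩ U with hG
    have hGopen : IsOpen G := hN.inter (hop U hU)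
    have hGne : G.Nonempty := ⟨x, hxN, hxU⟩
    have hGdisj : ∀ C ∈ 𝒞, Disjoint G C := by
      intro C hC
      rw [Set.disjoint_left]
      intro y hyG hyC
      have : y ∈ N ∩ ⋃₀ 𝒞 := ⟨hyG.1, C, hC, hyC⟩
      simp [hne] at this
    have hGnotmem : G ∉ 𝒞 := by
      intro hGmem
      obtain ⟨y, hy⟩ := hGne
      have : y ∈ N ∩ ⋃₀ 𝒞 := ⟨hy.1, G, hGmem, hy⟩
      simp [hne] at this
    have hins : insert G 𝒞 ∈ S := by
      refine ⟨h𝒞.1.insert fun C hC _ => hGdisj C hC, ?_⟩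
      rintro C (rfl | hC)
      · exact ⟨hGopen, hGne, U, hU, inter_subset_right⟩
      · exact h𝒞.2 C hC
    have : insert G 𝒞 ⊆ 𝒞 := hmax hins (subset_insert G 𝒞)
    exact hGnotmem (this (mem_insert G 𝒞))

/-- If `c(X) ≤ κ` then `pwL_c(X) ≤ κ`. -/
theorem pwLc_le_cellularity {X : Type u} [TopologicalSpace X] (κ : Cardinal.{u})
    (hκ : ℵ₀ ≤ κ)
    (hc : ∀ 𝒞 : Set (Set X), (∀ C ∈ 𝒞, IsOpen C ∧ C.Nonempty) →
      𝒞.PairwiseDisjoint id → #𝒞 ≤ κ) :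
    ∀ F : Set X, IsClosed F → ∀ (I : Type u) (𝒰 : I → Set (Set X)),
      (∀ i, ∀ U ∈ 𝒰 i, IsOpen U) → F ⊆ ⋃₀ (⋃ i, 𝒰 i) →
      ∃ 𝒱 : I → Set (Set X), (∀ i, 𝒱 i ⊆ 𝒰 i ∧ #(𝒱 i) ≤ κ) ∧
        F ⊆ ⋃ i, closure (⋃₀ 𝒱 i) := by
  intro F _ I 𝒰 hop hcov
  choose 𝒱 h𝒱sub h𝒱card h𝒱dense using fun i => weakLindelof_aux κ hc (𝒰 i) (hop i)
  refine ⟨𝒱, fun i => ⟨h𝒱sub i, h𝒱card i⟩, fun x hx => ?_⟩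
  obtain ⟨U, hU, hxU⟩ := hcov hx
  obtain ⟨i, hUi⟩ := mem_iUnion.mp hU
  exact mem_iUnion.mpr ⟨i, h𝒱dense i ⟨U, hUi, hxU⟩⟩
end

section
/- If X is a regular (T3) topological space and κ is an infinite cardinal such that the piecewise weak Lindelöf degree of X is at most κ, then the weak Lindelöf degree for closed sets is at most κ: for every closed set F ⊆ X and every family U of open sets with F ⊆ ⋃U, there is a subfamily V ⊆ U with |V| ≤ κ such that F ⊆ closure(⋃V). -/
open Set Cardinal

universe u

/-- In a regular space, `wL_c(X) ≤ pwL(X)`. -/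
theorem wLc_le_pwL_of_regular {X : Type u} [TopologicalSpace X] [RegularSpace X]
    (κ : Cardinal.{u}) (hκ : ℵ₀ ≤ κ)
    (hpwL : ∀ (I : Type u) (𝒰 : I → Set (Set X)),
      (∀ i, ∀ U ∈ 𝒰 i, IsOpen U) → ⋃₀ (⋃ i, 𝒰 i) = Set.univ →
      ∃ 𝒱 : I → Set (Set X), (∀ i, 𝒱 i ⊆ 𝒰 i ∧ #(𝒱 i) ≤ κ) ∧
        (⋃ i, closure (⋃₀ 𝒱 i)) = Set.univ) :
    ∀ F : Set X, IsClosed F → ∀ 𝒰 : Set (Set X), (∀ U ∈ 𝒰, IsOpen U) →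
      F ⊆ ⋃₀ 𝒰 → ∃ 𝒱 ⊆ 𝒰, #𝒱 ≤ κ ∧ F ⊆ closure (⋃₀ 𝒱) := by
  classical
  intro F hF 𝒰 hop hcov
  -- For each y ∉ F, choose an open O y with y ∈ O y and closure (O y) ⊆ Fᶜ.
  have hreg : ∀ y : X, y ∉ F → ∃ O : Set X, IsOpen O ∧ y ∈ O ∧ closure O ⊆ Fᶜ := by
    intro y hy
    obtain ⟨t, ht, htc, hts⟩ := exists_mem_nhds_isClosed_subset (hF.isOpen_compl.mem_nhds hy)
    exact ⟨interior t, isOpen_interior, mem_interior_iff_mem_nhds.2 ht,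
      (closure_minimal interior_subset htc).trans hts⟩
  choose! O hOopen hOmem hOcl using hreg
  -- The decomposition
  set 𝒜 : Set (Set X) := {W | IsOpen W ∧ ∃ U ∈ 𝒰, closure W ⊆ U} with h𝒜
  set fam : Option X → Set (Set X) := fun i =>
    match i with
    | none => 𝒜
    | some y => if y ∈ F then ∅ else {O y} with hfam
  have hfamop : ∀ i, ∀ U ∈ fam i, IsOpen U := by
    rintro (_ | y) U hU
    · exact hU.1
    · simp only [hfam] at hU
      split_ifs at hU with h
      · exact absurd hU (notMem_empty U)
      · rw [mem_singleton_iff] at hU; subst hU; exact hOopen y h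
  have hfamcov : ⋃₀ (⋃ i, fam i) = Set.univ := by
    apply eq_univ_of_forall
    intro x
    by_cases hx : x ∈ F
    · obtain ⟨U, hU, hxU⟩ := hcov hx
      obtain ⟨t, ht, htc, hts⟩ := exists_mem_nhds_isClosed_subset ((hop U hU).mem_nhds hxU)
      refine ⟨interior t, ?_, mem_interior_iff_mem_nhds.2 ht⟩
      refine mem_iUnion.2 ⟨none, isOpen_interior, U, hU, ?_⟩
      exact (closure_minimal interior_subset htc).trans hts
    · refine ⟨O x, mem_iUnion.2 ⟨some x, ?_⟩, hOmem x hx⟩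
      simp [hfam, hx]
  obtain ⟨𝒱f, h𝒱f, h𝒱cov⟩ := hpwL (Option X) fam hfamop hfamcov
  -- choose U(W) for W in 𝒱f none
  have hsel : ∀ W ∈ 𝒱f none, ∃ U ∈ 𝒰, closure W ⊆ U := fun W hW => ((h𝒱f none).1 hW).2
  choose! g hg hgcl using hsel
  refine ⟨g '' (𝒱f none), ?_, ?_, ?_⟩
  · rintro _ ⟨W, hW, rfl⟩; exact hg W hW
  · exact (Cardinal.mk_image_le).trans (h𝒱f none).2
  · intro x hx
    have := eq_univ_iff_forall.1 h𝒱cov x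
    obtain ⟨i, hi⟩ := mem_iUnion.1 this
    match i with
    | none =>
      refine closure_mono ?_ hi
      refine sUnion_subset fun W hW => ?_
      exact subset_trans (subset_closure.trans (hgcl W hW))
        (subset_sUnion_of_mem ⟨W, hW, rfl⟩)
    | some y =>
      exfalso
      by_cases hy : y ∈ F
      · have : 𝒱f (some y) ⊆ (∅ : Set (Set X)) := by
          have := (h𝒱f (some y)).1
          simpa [hfam, hy] using this
        rw [subset_empty_iff.1 this] at hi
        simpa using hi
      · have hsub : 𝒱f (some y) ⊆ {O y} := by
          have := (h𝒱f (some y)).1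
          simpa [hfam, hy] using this
        have : closure (⋃₀ 𝒱f (some y)) ⊆ closure (O y) :=
          closure_mono (sUnion_subset fun W hW => by
            rw [mem_singleton_iff.1 (hsub hW)])
        exact hOcl y hy (this hi) hx
end

section
/- Let X be a Hausdorff topological space and κ an infinite cardinal with χ(X) ≤ κ (every point has a neighbourhood base of size ≤ κ) and pwL_c(X) ≤ κ. Then |X| ≤ 2^κ. -/
/-!
A closing-off argument. Fix local bases `B x` of size at most `κ`. Build a set `F` with
`|F| ≤ 2 ^ κ` that contains the closure of each of its subsets of size at most `κ` (so `F` is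
closed, as `χ(X) ≤ κ`), and that meets the complement of `⋃ D ∈ 𝒟, closure (⋃₀ D)` whenever
this complement is nonempty, for every family `𝒟` of at most `κ` sets of basic open sets at
at most `κ` points of `F`. If some `p ∉ F`, separate `p` from each `x ∈ F` by disjoint basic
sets `V x ∋ x` and `W x ∋ p`, and decompose the cover `{V x}` of `F` according to
`W x ∈ B p`. The families that `pwL_c(X) ≤ κ` extracts form such a `𝒟`; the closures cover
`F` but miss `p`, so `F` has a point outside them, which is absurd.
-/

open Set Cardinal Filter Topology

universe u

namespace Cardinal

theorem mk_bounded_subset_le_of_power_eq {α : Type u} {s : Set α} {κ μ : Cardinal.{u}}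
    (hμ : ℵ₀ ≤ μ) (hμκ : μ ^ κ = μ) (hs : #s ≤ μ) : #{t : Set α // t ⊆ s ∧ #t ≤ κ} ≤ μ :=
  (mk_bounded_subset_le s κ).trans ((power_le_power_right (max_le hs hμ)).trans hμκ.le)

theorem two_power_power_self {κ : Cardinal.{u}} (hκ : ℵ₀ ≤ κ) :
    ((2 : Cardinal) ^ κ) ^ κ = 2 ^ κ := by
  rw [← power_mul, mul_eq_self hκ]

end Cardinal

theorem exists_subset_mk_le_subset_biUnion {α β : Type u} {t : Set α} {f : α → Set β}
    {s : Set β} (h : s ⊆ ⋃ x ∈ t, f x) : ∃ t' ⊆ t, #t' ≤ #s ∧ s ⊆ ⋃ x ∈ t', f x := by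
  have hcover : ∀ y : s, ∃ x ∈ t, y.1 ∈ f x := fun y => by simpa using h y.2
  choose g hgt hg using hcover
  refine ⟨range g, range_subset_iff.2 hgt, mk_range_le, fun y hy => ?_⟩
  exact mem_biUnion (mem_range_self ⟨y, hy⟩) (hg ⟨y, hy⟩)

namespace Ordinal

theorem exists_lt_subset_of_mk_lt_cof {X : Type u} {a : Ordinal.{u}} {A : Ordinal.{u} → Set X}
    (hA : Monotone A) {S : Set X} (hS : #S < a.cof) (hSA : S ⊆ ⋃ o < a, A o) :
    ∃ o < a, S ⊆ A o := by
  have hstage : ∀ s : S, ∃ o < a, s.1 ∈ A o := fun s => by simpa using hSA s.2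
  choose g hga hg using hstage
  refine ⟨iSup g, iSup_lt_of_lt_cof hS hga, fun s hs => ?_⟩
  exact hA (le_ciSup bddAbove_of_small ⟨s, hs⟩) (hg ⟨s, hs⟩)

end Ordinal

theorem exists_mk_le_closed_under_small_subsets {X : Type u} {κ μ : Cardinal.{u}}
    (hκ : ℵ₀ ≤ κ) (hκμ : κ < μ) (hμ : μ ^ κ = μ) (G : Set X → Set X)
    (hG : ∀ S : Set X, #S ≤ κ → #(G S) ≤ μ) :
    ∃ F : Set X, #F ≤ μ ∧ ∀ S ⊆ F, #S ≤ κ → G S ⊆ F := by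
  have hμ₀ : ℵ₀ ≤ μ := hκ.trans hκμ.le
  let φ : Set X → Set X := fun A => A ∪ ⋃ S ∈ {S : Set X | S ⊆ A ∧ #S ≤ κ}, G S
  have hφ : ∀ A : Set X, #A ≤ μ → #(φ A) ≤ μ := fun A hA =>
    calc #(φ A) ≤ #A + #{S : Set X | S ⊆ A ∧ #S ≤ κ} * μ :=
          (mk_union_le _ _).trans (add_le_add le_rfl ((mk_biUnion_le _ _).trans
            (mul_le_mul_right (ciSup_le' fun S => hG _ S.2.2) _)))
      _ ≤ μ + μ * μ :=
          add_le_add hA (mul_le_mul_left (mk_bounded_subset_le_of_power_eq hμ₀ hμ hA) _)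
      _ = μ := by rw [mul_eq_self hμ₀, add_eq_self hμ₀]
  let A : Ordinal.{u} → Set X := fun o => transfiniteIterate φ o ∅
  have hA : Monotone A := monotone_transfiniteIterate _ _ fun _ => subset_union_left
  have hA_limit : ∀ o, Order.IsSuccLimit o → A o = ⋃ o' < o, A o' := fun o ho => by
    show transfiniteIterate φ o ∅ = _
    rw [transfiniteIterate_limit _ _ _ ho]
    ext x
    simp [A]
  have hA_succ : ∀ o, A (Order.succ o) = φ (A o) := fun o =>
    transfiniteIterate_succ _ _ _ (not_isMax o)
  have hAμ : ∀ o, o.card ≤ μ → #(A o) ≤ μ := by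
    intro o
    induction o using SuccOrder.limitRecOn with
    | isMin o ho => simp only [A, ho.eq_bot, transfiniteIterate_bot, mk_eq_zero, zero_le, implies_true]
    | succ o _ IH =>
      exact fun h => hA_succ o ▸ hφ _ (IH ((Ordinal.card_le_card (Order.le_succ o)).trans h))
    | isSuccLimit o ho IH =>
      exact fun h => hA_limit o ho ▸ mk_biUnion_le_of_le h hμ₀ _
        fun j hj => IH j hj ((Ordinal.card_le_card hj.le).trans h)
  let Λ := (Order.succ κ).ord
  have hΛ : Order.IsSuccLimit Λ := isSuccLimit_ord (hκ.trans (Order.le_succ κ))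
  have hΛμ : Λ.card ≤ μ := (card_ord _).trans_le (Order.succ_le_of_lt hκμ)
  refine ⟨A Λ, hAμ Λ hΛμ, fun S hS hSκ => ?_⟩
  obtain ⟨o, ho, hSo⟩ := Ordinal.exists_lt_subset_of_mk_lt_cof hA
    (hSκ.trans_lt ((isRegular_succ hκ).cof_ord ▸ Order.lt_succ κ)) (hA_limit Λ hΛ ▸ hS)
  calc G S ⊆ φ (A o) := subset_union_of_subset_right
        (subset_biUnion_of_mem (u := G) (show S ∈ {S : Set X | S ⊆ A o ∧ #S ≤ κ} from ⟨hSo, hSκ⟩)) _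
    _ = A (Order.succ o) := (hA_succ o).symm
    _ ⊆ A Λ := hA (hΛ.succ_lt ho).le

section

variable {X : Type u} {κ : Cardinal.{u}} {B : X → Set (Set X)}

def basicFamilies (B : X → Set (Set X)) (κ : Cardinal.{u}) (S : Set X) :
    Set (Set (Set (Set X))) :=
  {𝒟 | 𝒟 ⊆ 𝒫 (⋃ x ∈ S, B x) ∧ #𝒟 ≤ κ}

theorem mk_basicFamilies_le (hκ : ℵ₀ ≤ κ) (hBκ : ∀ x, #(B x) ≤ κ) {S : Set X} (hS : #S ≤ κ) :
    #(basicFamilies B κ S) ≤ 2 ^ κ := by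
  have hSB : #(⋃ x ∈ S, B x) ≤ κ :=
    calc #(⋃ x ∈ S, B x) ≤ #S * ⨆ x : S, #(B x) := mk_biUnion_le B S
      _ ≤ κ * κ := mul_le_mul' hS (ciSup_le' fun x => hBκ x)
      _ = κ := mul_eq_self hκ
  have hpow : #(𝒫 (⋃ x ∈ S, B x)) ≤ 2 ^ κ :=
    (mk_powerset _).trans_le (power_le_power_left two_ne_zero hSB)
  exact mk_bounded_subset_le_of_power_eq (hκ.trans (cantor κ).le) (two_power_power_self hκ) hpow

end

def PwLcLE (X : Type u) [TopologicalSpace X] (κ : Cardinal.{u}) : Prop :=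
  ∀ F : Set X, IsClosed F → ∀ (I : Type u) (𝒰 : I → Set (Set X)),
    (∀ i, ∀ U ∈ 𝒰 i, IsOpen U) → F ⊆ ⋃₀ (⋃ i, 𝒰 i) →
    ∃ 𝒱 : I → Set (Set X), (∀ i, 𝒱 i ⊆ 𝒰 i ∧ #(𝒱 i) ≤ κ) ∧ F ⊆ ⋃ i, closure (⋃₀ 𝒱 i)

section

variable {X : Type u} [TopologicalSpace X] {κ : Cardinal.{u}} {B : X → Set (Set X)}

theorem exists_subset_mk_le_mem_closure {x : X} {𝓑 : Set (Set X)}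
    (h𝓑 : (𝓝 x).HasBasis (· ∈ 𝓑) id) {A : Set X} (hx : x ∈ closure A) :
    ∃ S ⊆ A, #S ≤ #𝓑 ∧ x ∈ closure S := by
  have hmeet : ∀ U : 𝓑, ∃ a ∈ A, a ∈ U.1 := fun U => (mem_closure_iff_nhds_basis h𝓑).1 hx U U.2
  choose g hgA hgU using hmeet
  refine ⟨range g, range_subset_iff.2 hgA, mk_range_le, ?_⟩
  exact (mem_closure_iff_nhds_basis h𝓑).2 fun U hU => ⟨g ⟨U, hU⟩, mem_range_self _, hgU ⟨U, hU⟩⟩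

theorem isClosed_of_closure_subset_of_mk_le (hB : ∀ x, (𝓝 x).HasBasis (· ∈ B x) id)
    (hBκ : ∀ x, #(B x) ≤ κ) {F : Set X} (hF : ∀ S ⊆ F, #S ≤ κ → closure S ⊆ F) :
    IsClosed F :=
  closure_subset_iff_isClosed.1 fun x hx => by
    obtain ⟨S, hSF, hS, hxS⟩ := exists_subset_mk_le_mem_closure (hB x) hx
    exact hF S hSF (hS.trans (hBκ x)) hxS

theorem injOn_image_inter_closure [T2Space X] (hB : ∀ x, (𝓝 x).HasBasis (· ∈ B x) id)
    (hBo : ∀ x, ∀ U ∈ B x, IsOpen U) (S : Set X) :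
    InjOn (fun x => (· ∩ S) '' B x) (closure S) := by
  intro x hx y hy (hxy : (· ∩ S) '' B x = (· ∩ S) '' B y)
  by_contra hne
  obtain ⟨U, hU, W, hW, hUW⟩ := ((hB x).disjoint_iff (hB y)).1 (disjoint_nhds_nhds.2 hne)
  obtain ⟨U', hU', hU'S : U' ∩ S = U ∩ S⟩ := hxy ▸ mem_image_of_mem (· ∩ S) hU
  have hyU : y ∈ closure U := by
    refine closure_mono (hU'S ▸ inter_subset_left) ((hBo y U' hU').inter_closure ⟨?_, hy⟩)
    exact mem_of_mem_nhds ((hB y).mem_of_mem hU')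
  exact (hUW.closure_left (hBo y W hW)).notMem_of_mem_left hyU
    (mem_of_mem_nhds ((hB y).mem_of_mem hW))

theorem mk_closure_le_two_power [T2Space X] (hκ : ℵ₀ ≤ κ)
    (hB : ∀ x, (𝓝 x).HasBasis (· ∈ B x) id) (hBo : ∀ x, ∀ U ∈ B x, IsOpen U)
    (hBκ : ∀ x, #(B x) ≤ κ) {S : Set X} (hS : #S ≤ κ) : #(closure S) ≤ 2 ^ κ := by
  have hpow : #(𝒫 S) ≤ 2 ^ κ := (mk_powerset S).trans_le (power_le_power_left two_ne_zero hS)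
  let trace : closure S → {T : Set (Set X) // T ⊆ 𝒫 S ∧ #T ≤ κ} := fun x =>
    ⟨(· ∩ S) '' B x, image_subset_iff.2 fun _ _ => inter_subset_right, mk_image_le.trans (hBκ x)⟩
  have htrace : Function.Injective trace := fun x y hxy =>
    Subtype.ext (injOn_image_inter_closure hB hBo S x.2 y.2 (congrArg Subtype.val hxy))
  exact (mk_le_of_injective htrace).trans
    (mk_bounded_subset_le_of_power_eq (hκ.trans (cantor κ).le) (two_power_power_self hκ) hpow)

theorem PwLcLE.eq_univ [T2Space X] (h : PwLcLE X κ) (hκ : ℵ₀ ≤ κ)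
    (hB : ∀ x, (𝓝 x).HasBasis (· ∈ B x) id) (hBo : ∀ x, ∀ U ∈ B x, IsOpen U)
    (hBκ : ∀ x, #(B x) ≤ κ) {F : Set X} (hF : IsClosed F)
    (hFcov : ∀ S ⊆ F, #S ≤ κ → ∀ 𝒟 ∈ basicFamilies B κ S,
      F ⊆ ⋃ D ∈ 𝒟, closure (⋃₀ D) → ⋃ D ∈ 𝒟, closure (⋃₀ D) = Set.univ) :
    F = Set.univ := by
  refine eq_univ_of_forall fun p => by_contra fun hp => ?_
  have hsep : ∀ x ∈ F, ∃ V ∈ B x, ∃ W ∈ B p, Disjoint V W := fun x hx =>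
    ((hB x).disjoint_iff (hB p)).1 (disjoint_nhds_nhds.2 (ne_of_mem_of_not_mem hx hp))
  choose V hV W hW hVW using hsep
  let 𝒰 : B p → Set (Set X) := fun i => {U | ∃ x, ∃ hx : x ∈ F, W x hx = i ∧ V x hx = U}
  have h𝒰 : ∀ i, ∀ U ∈ 𝒰 i, U ∈ ⋃ x ∈ F, B x ∧ Disjoint U i := by
    rintro i _ ⟨x, hx, hWi, rfl⟩
    exact ⟨mem_biUnion hx (hV x hx), hWi ▸ hVW x hx⟩
  obtain ⟨𝒱, h𝒱, hF𝒱⟩ := h F hF (B p) 𝒰 (by rintro i _ ⟨x, hx, -, rfl⟩; exact hBo x _ (hV x hx))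
    fun x hx => ⟨V x hx, mem_iUnion.2 ⟨⟨W x hx, hW x hx⟩, x, hx, rfl, rfl⟩,
      mem_of_mem_nhds ((hB x).mem_of_mem (hV x hx))⟩
  obtain ⟨S, hSF, hSκ, hS⟩ := exists_subset_mk_le_subset_biUnion (s := ⋃ i, 𝒱 i)
    (iUnion_subset fun i U hU => (h𝒰 i U ((h𝒱 i).1 hU)).1)
  have h𝒱κ : #(⋃ i, 𝒱 i) ≤ κ := (mk_iUnion_le _).trans
    ((mul_le_mul' (hBκ p) (ciSup_le' fun i => (h𝒱 i).2)).trans (mul_eq_self hκ).le)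
  have hcov := hFcov S hSF (hSκ.trans h𝒱κ) (range 𝒱)
    ⟨range_subset_iff.2 fun i U hU => hS (mem_iUnion_of_mem i hU), mk_range_le.trans (hBκ p)⟩
    (by rwa [biUnion_range])
  rw [biUnion_range] at hcov
  obtain ⟨i, hpi⟩ := mem_iUnion.1 (hcov ▸ mem_univ p)
  have hdisj : Disjoint (⋃₀ 𝒱 i) i := disjoint_sUnion_left.2 fun U hU => (h𝒰 i U ((h𝒱 i).1 hU)).2
  exact (hdisj.closure_left (hBo p i i.2)).notMem_of_mem_left hpi
    (mem_of_mem_nhds ((hB p).mem_of_mem i.2))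

end

/-- For every Hausdorff space `X`, `|X| ≤ 2 ^ (pwL_c(X) ⬝ χ(X))`. -/
theorem card_le_two_pow_pwLc_chi {X : Type u} [TopologicalSpace X] [T2Space X]
    (κ : Cardinal.{u}) (hκ : ℵ₀ ≤ κ)
    (hχ : ∀ x : X, ∃ B : Set (Set X), #B ≤ κ ∧
      (∀ U ∈ B, IsOpen U ∧ x ∈ U) ∧ ∀ V : Set X, IsOpen V → x ∈ V → ∃ U ∈ B, U ⊆ V)
    (hpwLc : ∀ F : Set X, IsClosed F → ∀ (I : Type u) (𝒰 : I → Set (Set X)),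
      (∀ i, ∀ U ∈ 𝒰 i, IsOpen U) → F ⊆ ⋃₀ (⋃ i, 𝒰 i) →
      ∃ 𝒱 : I → Set (Set X), (∀ i, 𝒱 i ⊆ 𝒰 i ∧ #(𝒱 i) ≤ κ) ∧
        F ⊆ ⋃ i, closure (⋃₀ 𝒱 i)) :
    #X ≤ 2 ^ κ := by
  rcases isEmpty_or_nonempty X with hX | hX
  · simp
  choose B hBκ hBx hBV using hχ
  have hB : ∀ x, (𝓝 x).HasBasis (· ∈ B x) id := fun x =>
    (nhds_basis_opens x).to_hasBasis (fun V hV => hBV x V hV.2 hV.1)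
      fun U hU => ⟨U, (hBx x U hU).symm, subset_rfl⟩
  have hBo : ∀ x, ∀ U ∈ B x, IsOpen U := fun x U hU => (hBx x U hU).1
  -- a point outside `⋃ D ∈ 𝒟, closure (⋃₀ D)` whenever there is one
  let uncovered : Set (Set (Set X)) → X := fun 𝒟 =>
    Classical.epsilon (· ∉ ⋃ D ∈ 𝒟, closure (⋃₀ D))
  obtain ⟨F, hFκ, hFG⟩ := exists_mk_le_closed_under_small_subsets hκ (cantor κ)
    (two_power_power_self hκ) (fun S => closure S ∪ uncovered '' basicFamilies B κ S)
    fun S hS => (mk_union_le _ _).trans <|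
      (add_le_add (mk_closure_le_two_power hκ hB hBo hBκ hS)
        (mk_image_le.trans (mk_basicFamilies_le hκ hBκ hS))).trans
      (add_eq_self (hκ.trans (cantor κ).le)).le
  have hF : IsClosed F := isClosed_of_closure_subset_of_mk_le hB hBκ fun S hSF hS =>
    subset_union_left.trans (hFG S hSF hS)
  have hFuniv : F = Set.univ := PwLcLE.eq_univ hpwLc hκ hB hBo hBκ hF
    fun S hSF hS 𝒟 h𝒟 hF𝒟 => by_contra fun hne => by
      obtain ⟨p, hp⟩ := (ne_univ_iff_exists_notMem _).1 hne
      exact Classical.epsilon_spec (p := (· ∉ ⋃ D ∈ 𝒟, closure (⋃₀ D))) ⟨p, hp⟩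
        (hF𝒟 (hFG S hSF hS (subset_union_right (mem_image_of_mem uncovered h𝒟))))
  rw [← mk_univ, ← hFuniv]
  exact hFκ
end

section
/- Let X be a Hausdorff space, κ an infinite cardinal, and suppose every point of X has a neighbourhood base of size ≤ κ (χ(X) ≤ κ). If the cellularity of X is at most κ, then |X| ≤ 2^κ. (Hajnal–Juhász inequality, derived as a corollary of the pwL_c bound.) -/
open Set Cardinal

universe u

/-!
Fix local bases `B x` of size `≤ κ`. Close off under the following operation: for every `S` of
size `≤ κ` and every family of `≤ κ` closures of unions of basic open sets at points of `S` that
does not cover `X`, add a point outside it. There are `(2 ^ κ) ^ κ = 2 ^ κ` such families, so a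
`κ⁺`-long iteration produces a closed-off set `A` with `|A| ≤ 2 ^ κ`.

If `p ∉ A`, separate each `x ∈ A` from `p` by disjoint `U x ∈ B x` and `W x ∈ B p`. For each
`W ∈ B p`, cellularity `≤ κ` gives `≤ κ` of the sets `U x` with `W x = W` whose union is dense in
the union of all of them. The closures of these `≤ κ` unions miss `p` (they miss `W`), yet they
cover `A`, contradicting that `A` is closed off.
-/

section ClosingOff

variable {X : Type u} (κ : Cardinal.{u}) (F : Set X → Set X)

noncomputable def closingOffStage : Ordinal.{u} → Set X
  | o => ⋃ S ∈ {S | S ⊆ ⋃ j < o, closingOffStage j ∧ #S ≤ κ}, F S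
termination_by o => o

variable {κ F}

theorem subset_closingOffStage {o : Ordinal.{u}} {S : Set X}
    (hS : S ⊆ ⋃ j < o, closingOffStage κ F j) (hSκ : #S ≤ κ) : F S ⊆ closingOffStage κ F o := by
  rw [closingOffStage]
  exact subset_biUnion_of_mem (u := F) ⟨hS, hSκ⟩

theorem mk_closingOffStage_le {θ : Cardinal.{u}} (hκ : ℵ₀ ≤ κ) (hκθ : κ < θ) (hθ : θ ^ κ ≤ θ)
    (hF : ∀ S : Set X, #S ≤ κ → #(F S) ≤ θ) {o : Ordinal.{u}} (ho : o < (Order.succ κ).ord) :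
    #(closingOffStage κ F o) ≤ θ := by
  have hθ₀ : ℵ₀ ≤ θ := hκ.trans hκθ.le
  induction o using WellFoundedLT.induction with
  | ind o IH =>
    have hprev : #(⋃ j < o, closingOffStage κ F j) ≤ θ :=
      mk_biUnion_le_of_le ((Order.lt_succ_iff.1 (lt_ord.1 ho)).trans hκθ.le) hθ₀ _
        fun j hj => IH j hj (hj.trans ho)
    rw [closingOffStage]
    calc _ ≤ _ := mk_biUnion_le _ _
      _ ≤ θ * θ := by
        gcongr
        · exact (mk_bounded_subset_le _ κ).trans
            ((power_le_power_right (max_le hprev hθ₀)).trans hθ)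
        · exact ciSup_le' fun S => hF S S.2.2
      _ = θ := mul_eq_self hθ₀

end ClosingOff

theorem exists_mk_le_closed_under {X : Type u} {κ θ : Cardinal.{u}} (F : Set X → Set X)
    (hκ : ℵ₀ ≤ κ) (hκθ : κ < θ) (hθ : θ ^ κ ≤ θ) (hF : ∀ S : Set X, #S ≤ κ → #(F S) ≤ θ) :
    ∃ A : Set X, #A ≤ θ ∧ ∀ S ⊆ A, #S ≤ κ → F S ⊆ A := by
  set Θ := (Order.succ κ).ord
  refine ⟨⋃ o < Θ, closingOffStage κ F o, ?_, fun S hSA hSκ => ?_⟩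
  · refine mk_biUnion_le_of_le ?_ (hκ.trans hκθ.le) _ fun o ho =>
      mk_closingOffStage_le hκ hκθ hθ hF ho
    rw [card_ord]
    exact Order.succ_le_of_lt hκθ
  · have hS : ∀ s : S, ∃ o < Θ, s.1 ∈ closingOffStage κ F o := fun s => by
      simpa using hSA s.2
    choose o hoΘ hso using hS
    have hsup : ⨆ s, o s + 1 < Θ := by
      refine Ordinal.iSup_add_one_lt_of_lt_cof ?_ hoΘ
      rw [(isRegular_succ hκ).cof_ord]
      exact hSκ.trans_lt (Order.lt_succ κ)
    refine (subset_closingOffStage (fun s hs => ?_) hSκ).trans (subset_biUnion_of_mem hsup)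
    exact mem_biUnion ((Order.lt_add_one_iff.2 le_rfl).trans_le
      (Ordinal.le_iSup (fun s : S => o s + 1) ⟨s, hs⟩)) (hso ⟨s, hs⟩)

theorem exists_maximal_pairwiseDisjoint_subset {α : Type*} (𝒪 : Set (Set α)) :
    ∃ 𝒞, Maximal (fun 𝒞 : Set (Set α) => 𝒞 ⊆ 𝒪 ∧ 𝒞.PairwiseDisjoint id) 𝒞 :=
  zorn_subset _ fun c hc hchain =>
    ⟨⋃₀ c, ⟨sUnion_subset fun _ ht => (hc ht).1,
      (hchain.pairwiseDisjoint_sUnion id).2 fun _ ht => (hc ht).2⟩,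
      fun _ => subset_sUnion_of_mem⟩

theorem exists_subset_mk_le_biUnion_subset_closure {X ι : Type u} [TopologicalSpace X]
    {κ : Cardinal.{u}} (hc : ∀ 𝒞 : Set (Set X), (∀ C ∈ 𝒞, IsOpen C ∧ C.Nonempty) →
      𝒞.PairwiseDisjoint id → #𝒞 ≤ κ)
    (s : Set ι) (U : ι → Set X) (hU : ∀ i ∈ s, IsOpen (U i)) :
    ∃ t ⊆ s, #t ≤ κ ∧ ⋃ i ∈ s, U i ⊆ closure (⋃ i ∈ t, U i) := by
  obtain ⟨𝒞, h𝒞⟩ := exists_maximal_pairwiseDisjoint_subset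
    {O | IsOpen O ∧ O.Nonempty ∧ ∃ i ∈ s, O ⊆ U i}
  choose j hjs hCj using fun C (hC : C ∈ 𝒞) => (h𝒞.1.1 hC).2.2
  set t := range fun C : 𝒞 => j C.1 C.2
  have hCt : ∀ C ∈ 𝒞, C ⊆ ⋃ i ∈ t, U i := fun C hC =>
    (hCj C hC).trans (subset_biUnion_of_mem (u := U) ⟨⟨C, hC⟩, rfl⟩)
  refine ⟨t, range_subset_iff.2 fun C => hjs C.1 C.2,
    mk_range_le.trans (hc 𝒞 (fun C hC => ⟨(h𝒞.1.1 hC).1, (h𝒞.1.1 hC).2.1⟩) h𝒞.1.2), ?_⟩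
  refine fun x hx => mem_closure_iff.2 fun V hV hxV => ?_
  obtain ⟨i, hi, hxi⟩ := mem_iUnion₂.1 hx
  by_contra hVt
  rw [not_nonempty_iff_eq_empty, ← disjoint_iff_inter_eq_empty] at hVt
  have hO : V ∩ U i ∈ 𝒞 := h𝒞.mem_of_prop_insert
    ⟨insert_subset ⟨hV.inter (hU i hi), ⟨x, hxV, hxi⟩, i, hi, inter_subset_right⟩ h𝒞.1.1,
      h𝒞.1.2.insert fun C hC _ => hVt.mono inter_subset_left (hCt C hC)⟩
  exact hVt.ne_of_mem hxV (hCt _ hO ⟨hxV, hxi⟩) rfl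

section LocalBases

variable {X : Type u} [TopologicalSpace X]

def closuresOfUnions (B : X → Set (Set X)) (S : Set X) : Set (Set X) :=
  (fun 𝒱 => closure (⋃₀ 𝒱)) '' 𝒫 (⋃ x ∈ S, B x)

theorem eq_univ_of_diff_sUnion_nonempty [T2Space X] {κ : Cardinal.{u}} (hκ : ℵ₀ ≤ κ)
    (hc : ∀ 𝒞 : Set (Set X), (∀ C ∈ 𝒞, IsOpen C ∧ C.Nonempty) →
      𝒞.PairwiseDisjoint id → #𝒞 ≤ κ)
    {B : X → Set (Set X)} (hBκ : ∀ x, #(B x) ≤ κ) (hBopen : ∀ x, ∀ U ∈ B x, IsOpen U ∧ x ∈ U)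
    (hBbase : ∀ x, ∀ V : Set X, IsOpen V → x ∈ V → ∃ U ∈ B x, U ⊆ V) {A : Set X}
    (hA : ∀ S ⊆ A, #S ≤ κ → ∀ 𝒯 ⊆ closuresOfUnions B S, #𝒯 ≤ κ →
      (⋃₀ 𝒯)ᶜ.Nonempty → (A \ ⋃₀ 𝒯).Nonempty) :
    A = Set.univ := by
  refine eq_univ_of_forall fun p => by_contra fun hpA => ?_
  have hsep : ∀ x : A, ∃ U ∈ B x, ∃ W ∈ B p, Disjoint U W := fun x => by
    obtain ⟨U, V, hU, hV, hxU, hpV, hUV⟩ := t2_separation (ne_of_mem_of_not_mem x.2 hpA)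
    obtain ⟨U', hU'B, hU'U⟩ := hBbase x U hU hxU
    obtain ⟨W, hWB, hWV⟩ := hBbase p V hV hpV
    exact ⟨U', hU'B, W, hWB, hUV.mono hU'U hWV⟩
  choose u hu w hw huw using hsep
  choose t ht htκ hdense using fun W : B p =>
    exists_subset_mk_le_biUnion_subset_closure hc {x | w x = W} u
      fun x _ => (hBopen x _ (hu x)).1
  have hp : ∀ W : B p, p ∉ closure (⋃ x ∈ t W, u x) := fun W => by
    have hWt : Disjoint W.1 (⋃ x ∈ t W, u x) :=
      disjoint_iUnion₂_right.2 fun x hx => (ht W hx ▸ huw x).symm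
    exact disjoint_left.1 (hWt.closure_right (hBopen p W W.2).1) (hBopen p W W.2).2
  have hSκ : #(⋃ W, Subtype.val '' t W) ≤ κ :=
    calc _ ≤ #(B p) * ⨆ W, #(Subtype.val '' t W) := mk_iUnion_le _
      _ ≤ κ * κ := mul_le_mul' (hBκ p) (ciSup_le' fun W => mk_image_le.trans (htκ W))
      _ = κ := mul_eq_self hκ
  have h𝒯 : (range fun W : B p => closure (⋃ x ∈ t W, u x)) ⊆
      closuresOfUnions B (⋃ W, Subtype.val '' t W) :=
    range_subset_iff.2 fun W => ⟨u '' t W, image_subset_iff.2 fun x hx =>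
      mem_biUnion (mem_iUnion_of_mem W (mem_image_of_mem _ hx)) (hu x),
      congrArg closure (sUnion_image _ _)⟩
  obtain ⟨q, hqA, hq⟩ := hA _ (iUnion_subset fun W => image_subset_iff.2 fun x _ => x.2) hSκ
    _ h𝒯 (mk_range_le.trans (hBκ p)) ⟨p, by simpa using hp⟩
  have hqU : q ∈ ⋃ x ∈ {x | w x = w ⟨q, hqA⟩}, u x :=
    mem_biUnion (x := ⟨q, hqA⟩) rfl (hBopen q _ (hu ⟨q, hqA⟩)).2
  exact hq (mem_sUnion_of_mem (hdense ⟨w ⟨q, hqA⟩, hw _⟩ hqU) (mem_range_self _))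

def outsidePoints (B : X → Set (Set X)) (κ : Cardinal.{u}) (S : Set X) : Set X :=
  range fun 𝒯 : {𝒯 : Set (Set X) // 𝒯 ⊆ closuresOfUnions B S ∧ #𝒯 ≤ κ ∧ (⋃₀ 𝒯)ᶜ.Nonempty} =>
    𝒯.2.2.2.some

theorem mk_outsidePoints_le {κ : Cardinal.{u}} (hκ : ℵ₀ ≤ κ) {B : X → Set (Set X)}
    (hBκ : ∀ x, #(B x) ≤ κ) {S : Set X} (hSκ : #S ≤ κ) :
    #(outsidePoints B κ S) ≤ 2 ^ κ := by
  have hC : #(closuresOfUnions B S) ≤ 2 ^ κ := by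
    refine mk_image_le.trans ?_
    rw [mk_powerset]
    refine power_le_power_left two_ne_zero ?_
    calc _ ≤ #S * ⨆ x : S, #(B x) := mk_biUnion_le _ _
      _ ≤ κ * κ := mul_le_mul' hSκ (ciSup_le' fun x => hBκ x)
      _ = κ := mul_eq_self hκ
  calc _ ≤ #{𝒯 : Set (Set X) // 𝒯 ⊆ closuresOfUnions B S ∧ #𝒯 ≤ κ} :=
        mk_range_le.trans (mk_subtype_mono fun _ h => ⟨h.1, h.2.1⟩)
    _ ≤ max #(closuresOfUnions B S) ℵ₀ ^ κ := mk_bounded_subset_le _ κ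
    _ ≤ (2 ^ κ) ^ κ := power_le_power_right (max_le hC (hκ.trans (cantor κ).le))
    _ = 2 ^ κ := by rw [← power_mul, mul_eq_self hκ]

end LocalBases

/-- Hajnal–Juhász: if `X` is Hausdorff, then `|X| ≤ 2 ^ (c(X) ⬝ χ(X))`. -/
theorem hajnal_juhasz {X : Type u} [TopologicalSpace X] [T2Space X]
    (κ : Cardinal.{u}) (hκ : ℵ₀ ≤ κ)
    (hχ : ∀ x : X, ∃ B : Set (Set X), #B ≤ κ ∧
      (∀ U ∈ B, IsOpen U ∧ x ∈ U) ∧ ∀ V : Set X, IsOpen V → x ∈ V → ∃ U ∈ B, U ⊆ V)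
    (hc : ∀ 𝒞 : Set (Set X), (∀ C ∈ 𝒞, IsOpen C ∧ C.Nonempty) →
      𝒞.PairwiseDisjoint id → #𝒞 ≤ κ) :
    #X ≤ 2 ^ κ := by
  choose B hBκ hBopen hBbase using hχ
  obtain ⟨A, hAκ, hA⟩ := exists_mk_le_closed_under (outsidePoints B κ) hκ (cantor κ)
    (by rw [← power_mul, mul_eq_self hκ]) fun S hSκ => mk_outsidePoints_le hκ hBκ hSκ
  have hAuniv : A = Set.univ := eq_univ_of_diff_sUnion_nonempty hκ hc hBκ hBopen hBbase
    fun S hSA hSκ 𝒯 h𝒯 h𝒯κ hne => ⟨_, hA S hSA hSκ ⟨⟨𝒯, h𝒯, h𝒯κ, hne⟩, rfl⟩, hne.some_mem⟩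
  rw [← mk_univ, ← hAuniv]
  exact hAκ
end

section
/- Let X be a topological space with tightness at most κ, and let M be a set (elementary-submodel style closure) of subsets and points such that: for every S ⊆ X ∩ M with |S| ≤ κ, S ∈ M; and F ∈ M is a cover of X by G^c_κ-sets each of which, for members of M, admits a witnessing family of open sets in M. Then every point of closure(X ∩ M) lies in some member of F ∩ M. (Claim 1 of the main theorem: F ∩ M covers the closure of X ∩ M.) -/
open Set Cardinal

universe u

/-- `G` is a `G^c_κ`-set: an intersection of `≤ κ` open sets that equals
the intersection of their closures. -/
def IsGcSet {X : Type u} [TopologicalSpace X] (κ : Cardinal.{u}) (G : Set X) : Prop :=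
  ∃ 𝒰 : Set (Set X), #𝒰 ≤ κ ∧ (∀ U ∈ 𝒰, IsOpen U) ∧
    G = ⋂₀ 𝒰 ∧ G = ⋂ U ∈ 𝒰, closure U

/-- Claim 1 of the main theorem: if `X` has tightness `≤ κ`, `D` is the set of points of
an elementary-submodel style closure `𝓜` (κ-closed, containing witnesses for the
`G^c_κ`-sets of the cover `ℱ` belonging to it, and reflecting membership in `ℱ`),
then `ℱ ∩ 𝓜` covers `closure D`. -/
theorem claim_one {X : Type u} [TopologicalSpace X]
    (κ : Cardinal.{u}) (hκ : ℵ₀ ≤ κ)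
    (ht : ∀ (A : Set X) (x : X), x ∈ closure A → ∃ S ⊆ A, #S ≤ κ ∧ x ∈ closure S)
    (D : Set X) (𝓜 : Set (Set X)) (ℱ : Set (Set X))
    (hcover : ⋃₀ ℱ = Set.univ) (hGc : ∀ G ∈ ℱ, IsGcSet κ G)
    -- κ-closedness of the model: every ≤κ-sized set of points of the model is in the model
    (hclosed : ∀ S : Set X, S ⊆ D → #S ≤ κ → S ∈ 𝓜)
    -- the model is closed under binary intersections and ≤κ-sized intersections of closures
    (hinter : ∀ A ∈ 𝓜, ∀ B ∈ 𝓜, A ∩ B ∈ 𝓜)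
    (hIcl : ∀ 𝒜 : Set (Set X), 𝒜 ⊆ 𝓜 → #𝒜 ≤ κ → (⋂ A ∈ 𝒜, closure A) ∈ 𝓜)
    -- members of ℱ in the model admit witnessing families of open sets in the model
    (hwit : ∀ G ∈ ℱ ∩ 𝓜, ∃ 𝒰 ⊆ 𝓜, #𝒰 ≤ κ ∧ (∀ U ∈ 𝒰, IsOpen U) ∧
      G = ⋂₀ 𝒰 ∧ G = ⋂ U ∈ 𝒰, closure U)
    -- elementarity: if a set of the model is contained in a member of ℱ,
    -- then it is contained in a member of ℱ belonging to the model
    (helem : ∀ B ∈ 𝓜, (∃ G ∈ ℱ, B ⊆ G) → ∃ G ∈ ℱ ∩ 𝓜, B ⊆ G) :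
    ∀ x ∈ closure D, ∃ G ∈ ℱ ∩ 𝓜, x ∈ G := by
  intro x hx
  obtain ⟨G₀, hG₀F, hxG₀⟩ : ∃ G ∈ ℱ, x ∈ G := by
    have : x ∈ ⋃₀ ℱ := by rw [hcover]; trivial
    exact this
  obtain ⟨𝒰, h𝒰κ, h𝒰open, hGs, hGcl⟩ := hGc G₀ hG₀F
  have key : ∀ U ∈ 𝒰, ∃ A, A ⊆ D ∧ #A ≤ κ ∧ x ∈ closure A ∧ A ⊆ U := by
    intro U hU
    have hxU : x ∈ U := by
      rw [hGs] at hxG₀; exact hxG₀ U hU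
    have hcl : x ∈ closure (U ∩ D) :=
      (h𝒰open U hU).inter_closure ⟨hxU, hx⟩
    obtain ⟨A, hAsub, hAκ, hAcl⟩ := ht (U ∩ D) x hcl
    exact ⟨A, fun a ha => (hAsub ha).2, hAκ, hAcl, fun a ha => (hAsub ha).1⟩
  choose! A hA1 hA2 hA3 hA4 using key
  set 𝒜 : Set (Set X) := (fun U : 𝒰 => A U) '' Set.univ with h𝒜
  have h𝒜M : 𝒜 ⊆ 𝓜 := by
    rintro _ ⟨⟨U, hU⟩, -, rfl⟩
    exact hclosed _ (hA1 U hU) (hA2 U hU)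
  have h𝒜κ : #𝒜 ≤ κ := by
    calc #𝒜 ≤ #𝒰 := by
          simpa [h𝒜, Set.image_univ] using Cardinal.mk_range_le
      _ ≤ κ := h𝒰κ
  have hBM : (⋂ A' ∈ 𝒜, closure A') ∈ 𝓜 := hIcl 𝒜 h𝒜M h𝒜κ
  have hxB : x ∈ ⋂ A' ∈ 𝒜, closure A' := by
    refine Set.mem_iInter₂.2 ?_
    rintro _ ⟨⟨U, hU⟩, -, rfl⟩
    exact hA3 U hU
  have hBG₀ : (⋂ A' ∈ 𝒜, closure A') ⊆ G₀ := by
    rw [hGcl]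
    refine Set.subset_iInter₂ fun U hU => ?_
    have : (⋂ A' ∈ 𝒜, closure A') ⊆ closure (A U) :=
      Set.biInter_subset_of_mem ⟨⟨U, hU⟩, Set.mem_univ _, rfl⟩
    exact this.trans (closure_mono (hA4 U hU))
  obtain ⟨G, hGFM, hBG⟩ := helem _ hBM ⟨G₀, hG₀F, hBG₀⟩
  exact ⟨G, hGFM, hBG hxB⟩
end

section
/- In any Urysohn space X (any two distinct points have disjoint closed neighbourhoods), the weak Lindelöf number for θ-closed sets is bounded by the piecewise weak Lindelöf number: if pwL(X) ≤ κ, then for every θ-closed set F ⊆ X and every open family U with F ⊆ ⋃U, there is V ⊆ U with |V| ≤ κ and F ⊆ closure(⋃V). -/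
open Set Cardinal

universe u

/-- In a Urysohn space, `wL_θ(X) ≤ pwL(X)`: if `pwL(X) ≤ κ`, then every open family
covering a θ-closed set has a ≤κ-sized subfamily whose union is dense around the set. -/
theorem wLtheta_le_pwL_of_urysohn {X : Type u} [TopologicalSpace X]
    (κ : Cardinal.{u}) (hκ : ℵ₀ ≤ κ)
    (hury : ∀ x y : X, x ≠ y → ∃ U V : Set X, IsOpen U ∧ IsOpen V ∧ x ∈ U ∧ y ∈ V ∧
      closure U ∩ closure V = ∅)
    (hpwL : ∀ (I : Type u) (𝒰 : I → Set (Set X)),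
      (∀ i, ∀ U ∈ 𝒰 i, IsOpen U) → ⋃₀ (⋃ i, 𝒰 i) = Set.univ →
      ∃ 𝒱 : I → Set (Set X), (∀ i, 𝒱 i ⊆ 𝒰 i ∧ #(𝒱 i) ≤ κ) ∧
        (⋃ i, closure (⋃₀ 𝒱 i)) = Set.univ)
    (F : Set X)
    (hθ : ∀ x ∉ F, ∃ U : Set X, IsOpen U ∧ x ∈ U ∧ closure U ∩ F = ∅)
    (𝒰 : Set (Set X)) (hopen : ∀ U ∈ 𝒰, IsOpen U) (hcov : F ⊆ ⋃₀ 𝒰) :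
    ∃ 𝒱 ⊆ 𝒰, #𝒱 ≤ κ ∧ F ⊆ closure (⋃₀ 𝒱) := by
  classical
  -- choose for each x ∉ F an open W x with closure disjoint from F
  have hW : ∀ x : X, ∃ W : Set X, x ∉ F → (IsOpen W ∧ x ∈ W ∧ closure W ∩ F = ∅) := by
    intro x
    by_cases hx : x ∈ F
    · exact ⟨∅, fun h => absurd hx h⟩
    · obtain ⟨U, hU⟩ := hθ x hx
      exact ⟨U, fun _ => hU⟩
  choose W hWspec using hW
  -- decomposition indexed by Option X
  set 𝒢 : Option X → Set (Set X) := fun i =>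
    match i with
    | none => 𝒰
    | some x => if x ∈ F then (∅ : Set (Set X)) else {W x}
  have hGopen : ∀ i, ∀ U ∈ 𝒢 i, IsOpen U := by
    intro i U hU
    match i with
    | none => exact hopen U hU
    | some x =>
      by_cases hx : x ∈ F
      · simp [𝒢, hx] at hU
      · simp [𝒢, hx] at hU
        subst hU
        exact (hWspec x hx).1
  have hGcov : ⋃₀ (⋃ i, 𝒢 i) = Set.univ := by
    apply eq_univ_of_forall
    intro x
    by_cases hx : x ∈ F
    · obtain ⟨U, hU, hxU⟩ := hcov hx
      exact ⟨U, mem_iUnion.2 ⟨none, hU⟩, hxU⟩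
    · refine ⟨W x, mem_iUnion.2 ⟨some x, ?_⟩, (hWspec x hx).2.1⟩
      simp [𝒢, hx]
  obtain ⟨𝒱, h𝒱, hcov𝒱⟩ := hpwL (Option X) 𝒢 hGopen hGcov
  refine ⟨𝒱 none, (h𝒱 none).1, (h𝒱 none).2, ?_⟩
  intro x hx
  have hxu : x ∈ ⋃ i, closure (⋃₀ 𝒱 i) := hcov𝒱 ▸ mem_univ x
  obtain ⟨i, hi⟩ := mem_iUnion.1 hxu
  match i with
  | none => exact hi
  | some y =>
    exfalso
    by_cases hy : y ∈ F
    · have : 𝒱 (some y) ⊆ (∅ : Set (Set X)) := by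
        have := (h𝒱 (some y)).1
        simpa [𝒢, hy] using this
      have h0 : 𝒱 (some y) = ∅ := subset_empty_iff.1 this
      rw [h0] at hi
      simp at hi
    · have hsub : 𝒱 (some y) ⊆ {W y} := by
        have := (h𝒱 (some y)).1
        simpa [𝒢, hy] using this
      have : ⋃₀ 𝒱 (some y) ⊆ W y := by
        intro z hz
        obtain ⟨S, hS, hzS⟩ := hz
        have := hsub hS
        simp at this
        exact this ▸ hzS
      have hcl : x ∈ closure (W y) := closure_mono this hi
      have := (hWspec y hy).2.2
      exact absurd (mem_inter hcl hx) (by rw [this]; exact notMem_empty x)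
end
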